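/- Fix a real number a and real numbers V, W, and let ρ > 0, z ∈ ℝ. Then for all vectors s, t in a real inner product space (e.g. ℝ³), with λ₁₁ = f₋ e^V cosh W, λ₂₂ = f₊ e^{−V} cosh W, λ₁₂ = ρ sinh W and e^{h₂} = f₋/ρ (equivalently h₂ = ½ log(f₋/f₊)), the following identity holds: λ₂₂‖s‖² − 2λ₁₂⟨s,t⟩ + λ₁₁‖t‖² = ρ · [ e^{h₂+V} cosh W · ‖e^{−h₂−V} tanh W · s − t‖² + e^{−h₂−V} (cosh W)^{−1} ‖s‖² ]. (This converts the twist-potential kinetic term λ^{ij}⟨∇ζ^i,∇ζ^j⟩ of the mass functional into an explicitly nonnegative sum of squares.) -/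

import Mathlib

/-! Write `μ = e^{h₂+V}`, so that `e^{-h₂-V} = μ⁻¹`. Expanding the square and using
`1 + sinh² W = cosh² W`, the right-hand side is
`ρ μ⁻¹ cosh W ‖s‖² − 2 ρ sinh W ⟨s,t⟩ + ρ μ cosh W ‖t‖²` for any `μ ≠ 0`. Since `f₋ f₊ = ρ²`
with `f₋ > 0`, one has `e^{h₂} = √(f₋/f₊) = f₋/ρ`, hence `ρ μ = f₋ e^V` and `ρ μ⁻¹ = f₊ e^{-V}`. -/

open Real RealInnerProductSpace

section SumOfSquares

variable {E : Type*} [NormedAddCommGroup E] [InnerProductSpace ℝ E]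

theorem norm_smul_sub_sq_real (c : ℝ) (s t : E) :
    ‖c • s - t‖ ^ 2 = c ^ 2 * ‖s‖ ^ 2 - 2 * c * ⟪s, t⟫ + ‖t‖ ^ 2 := by
  rw [norm_sub_sq_real, norm_smul, real_inner_smul_left, norm_eq_abs, mul_pow, sq_abs]
  ring

theorem cosh_mul_norm_tanh_smul_sub_sq_add {μ : ℝ} (hμ : μ ≠ 0) (W : ℝ) (s t : E) :
    μ * cosh W * ‖(μ⁻¹ * tanh W) • s - t‖ ^ 2 + μ⁻¹ * (cosh W)⁻¹ * ‖s‖ ^ 2 =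
      μ⁻¹ * cosh W * ‖s‖ ^ 2 - 2 * sinh W * ⟪s, t⟫ + μ * cosh W * ‖t‖ ^ 2 := by
  have hcosh : cosh W ≠ 0 := (cosh_pos W).ne'
  rw [norm_smul_sub_sq_real, tanh_eq_sinh_div_cosh]
  field_simp
  linear_combination (-‖s‖ ^ 2) * cosh_sq_sub_sinh_sq W

end SumOfSquares

theorem sqrt_sq_add_sq_sub_pos {ρ : ℝ} (hρ : ρ ≠ 0) (x : ℝ) : 0 < √(ρ ^ 2 + x ^ 2) - x := by
  have hlt : √(x ^ 2) < √(ρ ^ 2 + x ^ 2) :=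
    sqrt_lt_sqrt (sq_nonneg x) (lt_add_of_pos_left _ (sq_pos_of_ne_zero hρ))
  rw [sqrt_sq_eq_abs] at hlt
  linarith [le_abs_self x]

theorem sqrt_sq_add_sq_sub_mul_add (ρ x : ℝ) :
    (√(ρ ^ 2 + x ^ 2) - x) * (√(ρ ^ 2 + x ^ 2) + x) = ρ ^ 2 := by
  linear_combination sq_sqrt (by positivity : 0 ≤ ρ ^ 2 + x ^ 2)

theorem exp_half_log_div_of_mul_eq_sq {p q ρ : ℝ} (hρ : 0 < ρ) (hp : 0 < p)
    (hpq : p * q = ρ ^ 2) :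
    exp (1 / 2 * log (p / q)) = p / ρ := by
  have hdiv : p / q = (p / ρ) ^ 2 := by
    have hq : q = ρ ^ 2 / p := by field_simp; linarith
    rw [hq]; field_simp
  rw [hdiv, log_pow, Nat.cast_ofNat, ← mul_assoc, one_div_mul_cancel two_ne_zero, one_mul,
    exp_log (div_pos hp hρ)]

/-- For ρ > 0 and any vectors s, t in a real inner product space, with
λ₁₁ = f₋ e^V cosh W, λ₂₂ = f₊ e^{−V} cosh W, λ₁₂ = ρ sinh W and h₂ = ½ log(f₋/f₊),
the quadratic form λ₂₂‖s‖² − 2λ₁₂⟨s,t⟩ + λ₁₁‖t‖² equals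
ρ·[e^{h₂+V} cosh W ‖e^{−h₂−V} tanh W • s − t‖² + e^{−h₂−V} (cosh W)⁻¹ ‖s‖²]. -/
theorem twist_kinetic_term_sum_of_squares
    {E : Type*} [NormedAddCommGroup E] [InnerProductSpace ℝ E]
    (a V W ρ z : ℝ) (hρ : 0 < ρ)
    (fm fp h₂ lam₁₁ lam₂₂ lam₁₂ : ℝ)
    (hfm : fm = Real.sqrt (ρ ^ 2 + (z - a) ^ 2) - (z - a))
    (hfp : fp = Real.sqrt (ρ ^ 2 + (z - a) ^ 2) + (z - a))
    (hh₂ : h₂ = (1 / 2) * Real.log (fm / fp))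
    (hl₁₁ : lam₁₁ = fm * Real.exp V * Real.cosh W)
    (hl₂₂ : lam₂₂ = fp * Real.exp (-V) * Real.cosh W)
    (hl₁₂ : lam₁₂ = ρ * Real.sinh W)
    (s t : E) :
    lam₂₂ * ‖s‖ ^ 2 - 2 * lam₁₂ * (inner ℝ s t : ℝ) + lam₁₁ * ‖t‖ ^ 2 =
      ρ * (Real.exp (h₂ + V) * Real.cosh W *
            ‖(Real.exp (-h₂ - V) * Real.tanh W) • s - t‖ ^ 2 +
          Real.exp (-h₂ - V) * (Real.cosh W)⁻¹ * ‖s‖ ^ 2) := by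
  have hfm_pos : 0 < fm := hfm ▸ sqrt_sq_add_sq_sub_pos hρ.ne' (z - a)
  have hprod : fm * fp = ρ ^ 2 := hfm ▸ hfp ▸ sqrt_sq_add_sq_sub_mul_add ρ (z - a)
  have hμ : exp (h₂ + V) = fm / ρ * exp V := by
    rw [exp_add, hh₂, exp_half_log_div_of_mul_eq_sq hρ hfm_pos hprod]
  rw [show -h₂ - V = -(h₂ + V) by ring, exp_neg,
    cosh_mul_norm_tanh_smul_sub_sq_add (exp_pos _).ne', hμ, hl₁₁, hl₂₂, hl₁₂, exp_neg V]
  rw [show fp = ρ ^ 2 / fm by field_simp; linarith]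
  field_simp
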